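/- Corollary 1 (dual bounds with anchors at zero): let F : ℝ^n → ℝ be differentiable with L-Lipschitz continuous gradient, μ > 0, b₀ ∈ ℝ^n, A ∈ ℝ^{m×n} with nonzero j-th row a_j, h ∈ ℝ^m, and set η = 1/‖a_j‖². Suppose (q̲, λ̲), (q, λ), (q̄, λ̄) satisfy μ q̲ + ∇F(0) + b₀ + Aᵀλ̲ = 0, ∇F(q) + b₀ + Aᵀλ = 0, and L q̄ + ∇F(0) + b₀ + Aᵀλ̄ = 0, with λ̲_l = λ_l = λ̄_l = 0 for every l ≠ j, λ̲_j ≥ 0, λ_j ≥ 0, λ̄_j ≥ 0, and tightness ⟨a_j, q̲⟩ = h_j and ⟨a_j, q̄⟩ = h_j. Then λ_j ≥ max{ η[⟨a_j, −∇F(0) − b₀⟩ − μ h_j]^+ − √η(μ‖q̲‖ + L‖q‖), η[⟨a_j, −∇F(0) − b₀⟩ − L h_j]^+ − √η L(‖q̄‖ + ‖q‖), 0 } and λ_j ≤ min{ η[⟨a_j, −∇F(0) − b₀⟩ − μ h_j]^+ + √η(μ‖q̲‖ + L‖q‖), η[⟨a_j, −∇F(0) − b₀⟩ − L h_j]^+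 + √η L(‖q̄‖ + ‖q‖) }. -/

import Mathlib

open scoped RealInnerProductSpace

/-- `Aᵀ λ = ∑ l, λ_l a_l` where `a_l` is the `l`-th row of `A`, as a Euclidean vector. -/
noncomputable def transMul {m n : ℕ} (A : Matrix (Fin m) (Fin n) ℝ) (lam : Fin m → ℝ) :
    EuclideanSpace ℝ (Fin n) :=
  WithLp.toLp 2 (fun i => ∑ l, lam l * A l i)

/-- The `j`-th row of `A` regarded as a Euclidean vector. -/
noncomputable def rowVec {m n : ℕ} (A : Matrix (Fin m) (Fin n) ℝ) (j : Fin m) :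
    EuclideanSpace ℝ (Fin n) :=
  WithLp.toLp 2 (fun i => A j i)

/-!
Only the `j`-th constraint is active, so each stationarity condition reads `v + t • a = 0`
with `a = a_j`. Pairing with `a` and using tightness gives the multipliers of the two quadratic
models in closed form, `η [⟨a, -∇F(0) - b₀⟩ - κ h_j]^+` with `κ = μ, L`. Subtracting two
stationarity conditions gives `|t - s| ‖a‖ = ‖v - w‖`, and for the original problem against a
model `v - w = κ q_model + ∇F(0) - ∇F(q)`, whose norm is at most `κ ‖q_model‖ + L ‖q‖` by the
Lipschitz bound on `∇F`. Hence `λ_j` lies within `√η (κ ‖q_model‖ + L ‖q‖)` of each model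
multiplier, and `λ_j ≥ 0` by assumption.
-/

theorem transMul_eq_smul_rowVec {m n : ℕ} (A : Matrix (Fin m) (Fin n) ℝ) {lam : Fin m → ℝ}
    {j : Fin m} (hlam : ∀ l, l ≠ j → lam l = 0) : transMul A lam = lam j • rowVec A j := by
  ext i
  simp only [transMul, rowVec, PiLp.smul_apply, smul_eq_mul, PiLp.toLp_apply]
  exact Finset.sum_eq_single j (fun l _ hl => by rw [hlam l hl, zero_mul])
    (fun hj => absurd (Finset.mem_univ j) hj)

section StationaryMultiplier

variable {E : Type*} [NormedAddCommGroup E] [InnerProductSpace ℝ E] {a : E}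

theorem mul_norm_sq_eq_neg_inner_of_add_smul_eq_zero {v : E} {t : ℝ} (hv : v + t • a = 0) :
    t * ‖a‖ ^ 2 = -⟪a, v⟫ := by
  have := congrArg (⟪a, ·⟫) hv
  simp only [inner_add_right, inner_smul_right, real_inner_self_eq_norm_sq,
    inner_zero_right] at this
  linarith

theorem norm_sub_eq_abs_sub_mul_norm_of_add_smul_eq_zero {v w : E} {s t : ℝ}
    (hv : v + s • a = 0) (hw : w + t • a = 0) : ‖v - w‖ = |t - s| * ‖a‖ := by
  have hdiff : v - w = (t - s) • a := by
    rw [sub_smul, eq_neg_of_add_eq_zero_right hv, eq_neg_of_add_eq_zero_right hw]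
    abel
  rw [hdiff, norm_smul, Real.norm_eq_abs]

theorem eq_pos_part_of_tight_stationary {x g b : E} {κ t c : ℝ}
    (hstat : κ • x + g + b + t • a = 0) (htight : ⟪a, x⟫ = c) (ht : 0 ≤ t) (ha : a ≠ 0) :
    t = 1 / ‖a‖ ^ 2 * max (⟪a, -g - b⟫ - κ * c) 0 := by
  have hna : 0 < ‖a‖ ^ 2 := by positivity
  have hval : t * ‖a‖ ^ 2 = ⟪a, -g - b⟫ - κ * c := by
    rw [mul_norm_sq_eq_neg_inner_of_add_smul_eq_zero hstat]
    simp only [inner_add_right, inner_sub_right, inner_neg_right, inner_smul_right, htight]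
    ring
  rw [max_eq_left (hval ▸ by positivity), ← hval]
  field_simp

theorem abs_sub_le_of_stationary {x g g' b : E} {κ K s t : ℝ}
    (hs : κ • x + g + b + s • a = 0) (ht : g' + b + t • a = 0) (hκ : 0 ≤ κ)
    (hg : ‖g - g'‖ ≤ K) (ha : a ≠ 0) :
    |t - s| ≤ Real.sqrt (1 / ‖a‖ ^ 2) * (κ * ‖x‖ + K) := by
  have hna : 0 < ‖a‖ := norm_pos_iff.mpr ha
  have hnorm : |t - s| * ‖a‖ ≤ κ * ‖x‖ + K :=
    calc |t - s| * ‖a‖ = ‖κ • x + (g - g')‖ := by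
          rw [← norm_sub_eq_abs_sub_mul_norm_of_add_smul_eq_zero hs ht]
          congr 1
          abel
      _ ≤ ‖κ • x‖ + ‖g - g'‖ := norm_add_le _ _
      _ ≤ κ * ‖x‖ + K := by
          rw [norm_smul, Real.norm_of_nonneg hκ]
          linarith
  rw [Real.sqrt_div' _ (sq_nonneg _), Real.sqrt_one, Real.sqrt_sq hna.le, one_div_mul_eq_div,
    le_div_iff₀ hna]
  exact hnorm

end StationaryMultiplier

theorem dual_bounds_anchor_zero_general
    (n m : ℕ) (F : EuclideanSpace ℝ (Fin n) → ℝ) (L μ : ℝ) (hL : 0 < L) (hμ : 0 < μ)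
    (hlip : ∀ x y : EuclideanSpace ℝ (Fin n),
      ‖gradient F x - gradient F y‖ ≤ L * ‖x - y‖)
    (b0 qlow q qup : EuclideanSpace ℝ (Fin n))
    (A : Matrix (Fin m) (Fin n) ℝ) (j : Fin m) (haj : rowVec A j ≠ 0)
    (h : Fin m → ℝ) (lamlow lam lamup : Fin m → ℝ)
    (hstatlow : μ • qlow + gradient F 0 + b0 + transMul A lamlow = 0)
    (hstat : gradient F q + b0 + transMul A lam = 0)
    (hstatup : L • qup + gradient F 0 + b0 + transMul A lamup = 0)
    (hcs : ∀ l, l ≠ j → lamlow l = 0 ∧ lam l = 0 ∧ lamup l = 0)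
    (hlamlowj : 0 ≤ lamlow j) (hlamj : 0 ≤ lam j) (hlamupj : 0 ≤ lamup j)
    (htightlow : ⟪rowVec A j, qlow⟫ = h j)
    (htightup : ⟪rowVec A j, qup⟫ = h j)
    (η : ℝ) (hη : η = 1 / ‖rowVec A j‖ ^ 2) :
    max (max
        (η * max (⟪rowVec A j, -gradient F 0 - b0⟫ - μ * h j) 0 -
          Real.sqrt η * (μ * ‖qlow‖ + L * ‖q‖))
        (η * max (⟪rowVec A j, -gradient F 0 - b0⟫ - L * h j) 0 -
          Real.sqrt η * (L * (‖qup‖ + ‖q‖)))) 0 ≤ lam j ∧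
      lam j ≤ min
        (η * max (⟪rowVec A j, -gradient F 0 - b0⟫ - μ * h j) 0 +
          Real.sqrt η * (μ * ‖qlow‖ + L * ‖q‖))
        (η * max (⟪rowVec A j, -gradient F 0 - b0⟫ - L * h j) 0 +
          Real.sqrt η * (L * (‖qup‖ + ‖q‖))) := by
  subst hη
  rw [transMul_eq_smul_rowVec A fun l hl => (hcs l hl).1] at hstatlow
  rw [transMul_eq_smul_rowVec A fun l hl => (hcs l hl).2.1] at hstat
  rw [transMul_eq_smul_rowVec A fun l hl => (hcs l hl).2.2] at hstatup
  have hgrad : ‖gradient F 0 - gradient F q‖ ≤ L * ‖q‖ := by simpa using hlip 0 q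
  have hlow := eq_pos_part_of_tight_stationary hstatlow htightlow hlamlowj haj
  have hup := eq_pos_part_of_tight_stationary hstatup htightup hlamupj haj
  have hdlow := abs_sub_le_of_stationary hstatlow hstat hμ.le hgrad haj
  have hdup := abs_sub_le_of_stationary hstatup hstat hL.le hgrad haj
  rw [← mul_add] at hdup
  rw [abs_le] at hdlow hdup
  refine ⟨max_le (max_le ?_ ?_) hlamj, le_min ?_ ?_⟩ <;> linarith

/-- Corollary 1 (dual bounds with anchors at zero): with the stationarity conditions
(anchored at `r = 0`) of the lower model, original, and upper model problems, vanishing of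
all multiplier components except the `j`-th, nonnegativity of the `j`-th multipliers, and
tightness `⟨a_j, q̲⟩ = h_j`, `⟨a_j, q̄⟩ = h_j`, the shadow price `λ_j` of the original
problem satisfies the stated explicit lower and upper bounds. -/
theorem dual_bounds_anchor_zero
    (n m : ℕ) (F : EuclideanSpace ℝ (Fin n) → ℝ) (L μ : ℝ) (hL : 0 < L) (hμ : 0 < μ)
    (hF : Differentiable ℝ F)
    (hlip : ∀ x y : EuclideanSpace ℝ (Fin n),
      ‖gradient F x - gradient F y‖ ≤ L * ‖x - y‖)
    (b0 qlow q qup : EuclideanSpace ℝ (Fin n))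
    (A : Matrix (Fin m) (Fin n) ℝ) (j : Fin m) (haj : rowVec A j ≠ 0)
    (h : Fin m → ℝ) (lamlow lam lamup : Fin m → ℝ)
    (hstatlow : μ • qlow + gradient F 0 + b0 + transMul A lamlow = 0)
    (hstat : gradient F q + b0 + transMul A lam = 0)
    (hstatup : L • qup + gradient F 0 + b0 + transMul A lamup = 0)
    (hcs : ∀ l, l ≠ j → lamlow l = 0 ∧ lam l = 0 ∧ lamup l = 0)
    (hlamlowj : 0 ≤ lamlow j) (hlamj : 0 ≤ lam j) (hlamupj : 0 ≤ lamup j)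
    (htightlow : ⟪rowVec A j, qlow⟫ = h j)
    (htightup : ⟪rowVec A j, qup⟫ = h j)
    (η : ℝ) (hη : η = 1 / ‖rowVec A j‖ ^ 2) :
    max (max
        (η * max (⟪rowVec A j, -gradient F 0 - b0⟫ - μ * h j) 0 -
          Real.sqrt η * (μ * ‖qlow‖ + L * ‖q‖))
        (η * max (⟪rowVec A j, -gradient F 0 - b0⟫ - L * h j) 0 -
          Real.sqrt η * (L * (‖qup‖ + ‖q‖)))) 0 ≤ lam j ∧
      lam j ≤ min
        (η * max (⟪rowVec A j, -gradient F 0 - b0⟫ - μ * h j) 0 +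
          Real.sqrt η * (μ * ‖qlow‖ + L * ‖q‖))
        (η * max (⟪rowVec A j, -gradient F 0 - b0⟫ - L * h j) 0 +
          Real.sqrt η * (L * (‖qup‖ + ‖q‖))) :=
  dual_bounds_anchor_zero_general n m F L μ hL hμ hlip b0 qlow q qup A j haj h lamlow lam lamup
    hstatlow hstat hstatup hcs hlamlowj hlamj hlamupj htightlow htightup η hη
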